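/- arXiv:math/0505130 — 5 statements merged into one kernel-verified Lean document; each statement's English description precedes it below -/
import Mathlib

section
/- Let m ≥ 5 be an odd integer and let 2 ≤ j ≤ (m-1)/2. Then the ratio sin(jπ/m)/sin(π/m) is irrational. -/
/-!
If `q = sin (j π / m) / sin (π / m)` were rational, then `ζ = exp (i π / m)`, a primitive `2m`-th
root of unity, would be a root of the rational polynomial `X (X ^ (2j) - 1) - q X ^ j (X ^ 2 - 1)`,
and so would every Galois conjugate `ζ ^ k`, `k` coprime to `2m`; that is,
`sin (j k π / m) = q sin (k π / m)` for all such `k`. For odd `m`, one of `(m ± 1) / 2` is such a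
`k`, and for it `sin (k π / m) = cos (π / (2m))` is the largest value of `sin (ℓ π / m)`, `ℓ ∈ ℕ`.
Hence `q ≤ 1`, while `1 < q` because `π / m < j π / m ≤ π / 2`.
-/

open Real Polynomial

theorem IsPrimitiveRoot.aeval_pow_eq_zero_of_coprime {K : Type*} [Field K] [CharZero K] {ζ : K}
    {n : ℕ} (hζ : IsPrimitiveRoot ζ n) (hn : 0 < n) {P : ℚ[X]} (hP : aeval ζ P = 0) {k : ℕ}
    (hk : k.Coprime n) : aeval (ζ ^ k) P = 0 := by
  have hmin : minpoly ℚ ζ = minpoly ℚ (ζ ^ k) := by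
    rw [← cyclotomic_eq_minpoly_rat hζ hn, ← cyclotomic_eq_minpoly_rat (hζ.pow_of_coprime k hk) hn]
  exact aeval_eq_zero_of_dvd_aeval_eq_zero (hmin ▸ minpoly.dvd ℚ ζ hP) (minpoly.aeval ℚ _)

namespace Complex

theorem exp_mul_I_pow_two_mul_sub_one (θ : ℂ) (a : ℕ) :
    exp (θ * I) ^ (2 * a) - 1 = 2 * I * sin (a * θ) * exp (θ * I) ^ a := by
  rw [pow_mul', ← exp_nat_mul, ← mul_assoc, exp_mul_I]
  linear_combination sin_sq_add_cos_sq ((a : ℂ) * θ) - sin (a * θ) ^ 2 * I_sq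

theorem sin_nat_mul_eq_mul_sin_iff (θ q : ℂ) (j : ℕ) :
    sin (j * θ) = q * sin θ ↔
      exp (θ * I) * (exp (θ * I) ^ (2 * j) - 1) = q * exp (θ * I) ^ j * (exp (θ * I) ^ 2 - 1) := by
  have hsin_j := exp_mul_I_pow_two_mul_sub_one θ j
  have hsin_one := exp_mul_I_pow_two_mul_sub_one θ 1
  rw [Nat.cast_one, one_mul, mul_one] at hsin_one
  set z := exp (θ * I) with hz
  have hfactor : z * (z ^ (2 * j) - 1) - q * z ^ j * (z ^ 2 - 1)
      = 2 * I * z ^ (j + 1) * (sin (j * θ) - q * sin θ) := by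
    rw [hsin_j, hsin_one]; ring
  rw [← sub_eq_zero, ← sub_eq_zero (a := z * _), hfactor, mul_eq_zero,
    or_iff_right (by simp [hz, exp_ne_zero])]

end Complex

theorem Real.sin_nat_mul_eq_rat_mul_sin_of_coprime {θ : ℝ} {n : ℕ} (hn : 0 < n)
    (hζ : IsPrimitiveRoot (Complex.exp (θ * Complex.I)) n) {j k : ℕ} (hk : k.Coprime n) {q : ℚ}
    (h : sin (j * θ) = q * sin θ) : sin (j * (k * θ)) = q * sin (k * θ) := by
  let P : ℚ[X] := X * (X ^ (2 * j) - 1) - C q * X ^ j * (X ^ 2 - 1)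
  have aeval_P (z : ℂ) : aeval z P = z * (z ^ (2 * j) - 1) - q * z ^ j * (z ^ 2 - 1) := by
    simp [P]
  have hP : aeval (Complex.exp (θ * Complex.I)) P = 0 := by
    rw [aeval_P, sub_eq_zero, ← Complex.sin_nat_mul_eq_mul_sin_iff]
    exact_mod_cast h
  have hPk := hζ.aeval_pow_eq_zero_of_coprime hn hP hk
  rw [aeval_P, sub_eq_zero, ← Complex.exp_nat_mul, ← mul_assoc,
    ← Complex.sin_nat_mul_eq_mul_sin_iff] at hPk
  exact_mod_cast hPk

theorem Real.cos_pi_div_two_mul_pos {m : ℕ} (hm : 1 < m) : 0 < cos (π / (2 * m)) := by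
  have hm' : (1 : ℝ) < m := by exact_mod_cast hm
  apply cos_pos_of_mem_Ioo ⟨by linarith [show 0 < π / (2 * m) by positivity, pi_pos], ?_⟩
  exact div_lt_div_of_pos_left pi_pos two_pos (by linarith)

theorem Real.sin_nat_mul_pi_div_le_cos_of_lt {m r : ℕ} (hm : Odd m) (hr : r < m) :
    sin (r * (π / m)) ≤ cos (π / (2 * m)) := by
  have hm0 : (0 : ℝ) < m := by exact_mod_cast hm.pos
  obtain ⟨c, hc⟩ := hm
  set t : ℤ := m - 2 * r with ht
  have ht_bounds : (1 : ℝ) ≤ |(t : ℝ)| ∧ |(t : ℝ)| ≤ m := by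
    have : 1 ≤ |t| ∧ |t| ≤ m := ⟨Int.one_le_abs (by omega), abs_le.mpr ⟨by omega, by omega⟩⟩
    rw [← Int.cast_abs]
    exact_mod_cast this
  have harg : π / 2 - r * (π / m) = t * (π / (2 * m)) := by
    rw [ht]; push_cast; field_simp
  rw [← cos_pi_div_two_sub, harg, ← cos_abs (t * _), abs_mul,
    abs_of_pos (a := π / (2 * m)) (by positivity)]
  apply cos_le_cos_of_nonneg_of_le_pi (by positivity)
  · calc |(t : ℝ)| * (π / (2 * m)) ≤ m * (π / (2 * m)) := by gcongr; exact ht_bounds.2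
      _ ≤ π := by field_simp; linarith [pi_pos]
  · exact le_mul_of_one_le_left (by positivity) ht_bounds.1

theorem Real.sin_nat_mul_pi_div_le_cos {m : ℕ} (hm : Odd m) (ℓ : ℕ) :
    sin (ℓ * (π / m)) ≤ cos (π / (2 * m)) := by
  have hm0 : (0 : ℝ) < m := by exact_mod_cast hm.pos
  obtain ⟨r, s, hr, rfl⟩ : ∃ r s, r < 2 * m ∧ ℓ = r + s * (2 * m) :=
    ⟨ℓ % (2 * m), ℓ / (2 * m), Nat.mod_lt _ (by have := hm.pos; omega), (Nat.mod_add_div' _ _).symm⟩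
  have hperiod : ((r + s * (2 * m) : ℕ) : ℝ) * (π / m) = r * (π / m) + s * (2 * π) := by
    push_cast; field_simp
  rw [hperiod, sin_add_nat_mul_two_pi]
  rcases lt_or_ge r m with hrm | hmr
  · exact sin_nat_mul_pi_div_le_cos_of_lt hm hrm
  have hnonpos : sin (r * (π / m)) ≤ 0 := by
    rw [← sin_sub_two_pi]
    apply sin_nonpos_of_nonpos_of_neg_pi_le
    · rw [sub_nonpos, ← mul_div_assoc, div_le_iff₀ hm0]
      have : (r : ℝ) ≤ 2 * m := by exact_mod_cast hr.le
      nlinarith [pi_pos]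
    · rw [← mul_div_assoc, le_sub_iff_add_le, le_div_iff₀ hm0]
      have : (m : ℝ) ≤ r := by exact_mod_cast hmr
      nlinarith [pi_pos]
  have hm1 : (1 : ℝ) ≤ m := by exact_mod_cast hm.pos
  refine hnonpos.trans (cos_nonneg_of_neg_pi_div_two_le_of_le ?_ ?_)
  · linarith [show 0 < π / (2 * m) by positivity, pi_pos]
  · exact div_le_div_of_nonneg_left pi_pos.le two_pos (by linarith)

theorem Real.exists_coprime_sin_nat_mul_eq_cos {m : ℕ} (hm : Odd m) :
    ∃ k : ℕ, k.Coprime (2 * m) ∧ sin (k * (π / m)) = cos (π / (2 * m)) := by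
  obtain ⟨c, rfl⟩ := hm
  rcases Nat.even_or_odd c with hc | hc
  · refine ⟨c + 1, Nat.Coprime.mul_right ?_ ?_, ?_⟩
    · exact (by simpa [parity_simps] using hc : Odd (c + 1)).coprime_two_right
    · rw [show 2 * c + 1 = c + (c + 1) by ring, Nat.coprime_add_self_right]
      simp
    · rw [← sin_add_pi_div_two]; congr 1; push_cast; field_simp; ring
  · refine ⟨c, Nat.Coprime.mul_right hc.coprime_two_right ?_, ?_⟩
    · simp
    · rw [← sin_pi_div_two_sub]; congr 1; push_cast; field_simp; ring

theorem Real.one_lt_sin_nat_mul_div_sin {m j : ℕ} (hj : 2 ≤ j) (hjm : 2 * j ≤ m) :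
    1 < sin (j * π / m) / sin (π / m) := by
  have hm : (4 : ℝ) ≤ m := by exact_mod_cast (by omega : 4 ≤ m)
  have hj' : (2 : ℝ) ≤ j := by exact_mod_cast hj
  have hjm' : 2 * (j : ℝ) ≤ m := by exact_mod_cast hjm
  have hθ : 0 < π / m := by positivity
  rw [one_lt_div (sin_pos_of_pos_of_lt_pi hθ (div_lt_self pi_pos (by linarith)))]
  apply sin_lt_sin_of_lt_of_le_pi_div_two (by linarith [pi_pos])
  · rw [div_le_iff₀ (by positivity)]; nlinarith [pi_pos]
  · rw [mul_div_assoc]; nlinarith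

theorem quantum_dimension_irrational_general (m j : ℕ) (hodd : Odd m)
    (hj2 : 2 ≤ j) (hjm : j ≤ (m - 1) / 2) :
    Irrational (Real.sin (j * π / m) / Real.sin (π / m)) := by
  rintro ⟨q, hq⟩
  have hratio := one_lt_sin_nat_mul_div_sin hj2 (by omega : 2 * j ≤ m)
  have hsin_ne : sin (π / m) ≠ 0 := fun h ↦ by norm_num [h] at hratio
  have hsin_j : sin (j * (π / m)) = q * sin (π / m) := by
    rw [hq, div_mul_cancel₀ _ hsin_ne, mul_div_assoc]
  rw [← hq] at hratio
  have hm : 0 < 2 * m := by omega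
  have hζ : IsPrimitiveRoot (Complex.exp ((π / m : ℝ) * Complex.I)) (2 * m) := by
    convert Complex.isPrimitiveRoot_exp (2 * m) hm.ne' using 2
    push_cast; field_simp
  obtain ⟨k, hk, hsin_k⟩ := exists_coprime_sin_nat_mul_eq_cos hodd
  have hbound := sin_nat_mul_pi_div_le_cos hodd (j * k)
  rw [Nat.cast_mul, mul_assoc, sin_nat_mul_eq_rat_mul_sin_of_coprime hm hζ hk hsin_j, hsin_k]
    at hbound
  nlinarith [cos_pi_div_two_mul_pos (m := m) (by omega)]

theorem quantum_dimension_irrational (m j : ℕ) (hm : 5 ≤ m) (hodd : Odd m)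
    (hj2 : 2 ≤ j) (hjm : j ≤ (m - 1) / 2) :
    Irrational (Real.sin (j * π / m) / Real.sin (π / m)) :=
  quantum_dimension_irrational_general m j hodd hj2 hjm
end

section
/- Let m be a positive odd integer, ζ = exp(2πi/(2m)), and 2 ≤ j ≤ (m-1)/2 with j even. Then ζ^{j-1} + ζ^{j-3} + ⋯ + ζ^{-(j-1)} ≠ ζ^{(j-1)(m-2)} + ζ^{(j-3)(m-2)} + ⋯ + ζ^{-(j-1)(m-2)}. -/
/-!
Write `ζ = e^{iθ}` with `θ = π / m` and compare real parts. Both become cosine sums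
`∑ cos ((j - 1 - 2k) φ) = sin (j φ) / sin φ`, at `φ = θ` and at `φ = (m - 2) θ = π - 2θ`.
As `j` is even the exponents are odd, so the second sum is minus the sum at `φ = 2θ`;
since `2jθ < π`, the sums at `θ` and `2θ` are both positive.
-/

open Real Finset

theorem sin_mul_sum_cos_eq_sin_mul (θ : ℝ) (j : ℕ) :
    sin θ * ∑ k ∈ range j, cos (((j : ℝ) - 1 - 2 * k) * θ) = sin (j * θ) := by
  have hterm : ∀ k ∈ range j, sin θ * cos (((j : ℝ) - 1 - 2 * k) * θ) =
      sin (((j : ℝ) - 2 * k) * θ) / 2 - sin (((j : ℝ) - 2 * ↑(k + 1)) * θ) / 2 := by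
    intro k _
    rw [div_sub_div_same, sin_sub_sin]
    push_cast
    ring_nf
  rw [mul_sum, sum_congr rfl hterm,
    sum_range_sub' (fun k : ℕ => sin (((j : ℝ) - 2 * k) * θ) / 2)]
  rw [show ((j : ℝ) - 2 * j) * θ = -(j * θ) by ring]
  simp only [Nat.cast_zero, mul_zero, sub_zero, sin_neg]
  ring

theorem sum_cos_pos {θ : ℝ} {j : ℕ} (hθ : 0 < θ) (hj : 0 < j) (hjθ : j * θ < π) :
    0 < ∑ k ∈ range j, cos (((j : ℝ) - 1 - 2 * k) * θ) := by
  have hθπ : θ < π := by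
    have : (1 : ℝ) ≤ j := by exact_mod_cast hj
    nlinarith
  have hsin_jθ : 0 < sin (j * θ) := sin_pos_of_pos_of_lt_pi (by positivity) hjθ
  rw [← sin_mul_sum_cos_eq_sin_mul] at hsin_jθ
  exact pos_of_mul_pos_right hsin_jθ (sin_pos_of_pos_of_lt_pi hθ hθπ).le

theorem cos_mul_pi_sub_of_odd {n : ℤ} (hn : Odd n) (x : ℝ) :
    cos (n * (π - x)) = -cos (n * x) := by
  rw [mul_sub, cos_int_mul_pi_sub, hn.neg_one_zpow, neg_one_mul]

theorem sum_cos_mul_pi_sub_of_even {j : ℕ} (hj : Even j) (x : ℝ) :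
    ∑ k ∈ range j, cos (((j : ℝ) - 1 - 2 * k) * (π - x)) =
      -∑ k ∈ range j, cos (((j : ℝ) - 1 - 2 * k) * x) := by
  rw [← sum_neg_distrib]
  refine sum_congr rfl fun k _ => ?_
  have hodd : Odd ((j : ℤ) - 1 - 2 * k) := by
    rw [Int.odd_sub, Int.odd_sub]
    simp [hj]
  exact_mod_cast cos_mul_pi_sub_of_odd hodd x

theorem Complex.re_exp_ofReal_mul_I_zpow (θ : ℝ) (n : ℤ) :
    (Complex.exp (θ * Complex.I) ^ n).re = Real.cos (n * θ) := by
  rw [← Complex.exp_int_mul, ← mul_assoc]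
  exact_mod_cast Complex.exp_ofReal_mul_I_re (n * θ)

theorem galois_moves_quantum_integer_general (m j : ℕ) (hj2 : 2 ≤ j)
    (hjm : j ≤ (m - 1) / 2) (hje : Even j)
    (ζ : ℂ) (hζ : ζ = Complex.exp (2 * Real.pi * Complex.I / (2 * m))) :
    ∑ k ∈ Finset.range j, ζ ^ ((j : ℤ) - 1 - 2 * k) ≠
      ∑ k ∈ Finset.range j, ζ ^ (((j : ℤ) - 1 - 2 * k) * ((m : ℤ) - 2)) := by
  have hm : (2 * j + 1 : ℝ) ≤ m := by exact_mod_cast (by omega : 2 * j + 1 ≤ m)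
  have hm0 : (0 : ℝ) < m := by linarith
  set θ := π / m with hθ
  have hζθ : ζ = Complex.exp (θ * Complex.I) := by
    rw [hζ, hθ]
    congr 1
    push_cast
    field_simp
  have hθ_pos : 0 < θ := by positivity
  have hjθ : (2 * j : ℝ) * θ < π := by
    rw [hθ, mul_div_assoc', div_lt_iff₀ hm0]
    nlinarith [pi_pos]
  have hangle : ((m : ℝ) - 2) * θ = π - 2 * θ := by
    rw [hθ]; field_simp
  intro h
  have hre := congrArg Complex.re h
  rw [hζθ] at hre
  simp only [Complex.re_sum, Complex.re_exp_ofReal_mul_I_zpow] at hre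
  push_cast at hre
  simp only [mul_assoc, hangle, sum_cos_mul_pi_sub_of_even hje] at hre
  have hlhs := sum_cos_pos hθ_pos (j := j) (by omega) (by nlinarith)
  have hrhs := sum_cos_pos (by positivity : 0 < 2 * θ) (j := j) (by omega) (by linarith)
  linarith

theorem galois_moves_quantum_integer (m j : ℕ) (hodd : Odd m) (hj2 : 2 ≤ j)
    (hjm : j ≤ (m - 1) / 2) (hje : Even j)
    (ζ : ℂ) (hζ : ζ = Complex.exp (2 * Real.pi * Complex.I / (2 * m))) :
    ∑ k ∈ Finset.range j, ζ ^ ((j : ℤ) - 1 - 2 * k) ≠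
      ∑ k ∈ Finset.range j, ζ ^ (((j : ℤ) - 1 - 2 * k) * ((m : ℤ) - 2)) :=
  galois_moves_quantum_integer_general m j hj2 hjm hje ζ hζ
end

section
/- Let m be a positive odd integer with m ≥ 5, and let j be an even integer with 2 ≤ j ≤ (m-1)/2. Then sin(jπ/m)/sin(π/m) ∉ ℚ. -/
/-!
With `ζ = exp (π I / m)` and `d = sin (j π / m) / sin (π / m)`, the geometric sum
`ζ ^ 0 + ζ ^ 2 + ⋯ + ζ ^ (2j - 2)` equals `d ζ ^ (j - 1)`. If `d` were rational, this would be a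
polynomial relation over `ℚ` satisfied by the primitive `2m`-th root of unity `ζ`, hence by each of
its Galois conjugates, among them `ζ ^ (m - 2) = exp ((π - 2π/m) I)` (`m - 2` is prime to `2m`
because `m` is odd). Read back through the sine formula, this gives
`d = sin (j (π - 2π/m)) / sin (π - 2π/m) = -sin (2jπ/m) / sin (2π/m)`, using that `j` is even; but
`d > 0` while the right-hand side is negative because `2j < m`.
-/

open Real Polynomial

theorem IsPrimitiveRoot.aeval_eq_zero_of_aeval_eq_zero {K : Type*} [Field K] [CharZero K]
    {n : ℕ} (hn : 0 < n) {ζ η : K} (hζ : IsPrimitiveRoot ζ n) (hη : IsPrimitiveRoot η n)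
    {p : ℚ[X]} (hp : aeval ζ p = 0) : aeval η p = 0 := by
  rw [← minpoly.dvd_iff, ← cyclotomic_eq_minpoly_rat hη hn, cyclotomic_eq_minpoly_rat hζ hn]
  exact minpoly.dvd ℚ ζ hp

theorem Nat.coprime_sub_two_two_mul_of_odd {m : ℕ} (hm : Odd m) (h : 2 ≤ m) :
    Nat.Coprime (m - 2) (2 * m) := by
  have hodd : Odd (m - 2) := Nat.Odd.sub_even h hm even_two
  refine Nat.Coprime.mul_right (Nat.coprime_two_right.mpr hodd) ?_
  rw [show m = 2 + (m - 2) by omega, Nat.add_sub_cancel_left, Nat.coprime_add_self_right]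
  exact Nat.coprime_two_right.mpr hodd

theorem Real.sin_nat_mul_pi_div_pos {k m : ℕ} (hk : 0 < k) (hkm : k < m) :
    0 < sin (k * π / m) := by
  have hm : (0 : ℝ) < m := by exact_mod_cast hk.trans hkm
  have hkm' : (k : ℝ) < m := by exact_mod_cast hkm
  apply sin_pos_of_pos_of_lt_pi (by positivity)
  rw [div_lt_iff₀ hm]
  nlinarith [pi_pos]

theorem Real.sin_mul_pi_sub_of_even {j : ℕ} (hj : Even j) (x : ℝ) :
    sin (j * (π - x)) = -sin (j * x) := by
  rw [mul_sub, sin_nat_mul_pi_sub, hj.neg_one_pow, one_mul]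

namespace Complex

theorem two_I_mul_exp_pow_mul_sin (θ : ℂ) (n : ℕ) :
    2 * I * (exp (θ * I) ^ n * sin (n * θ)) = exp (θ * I) ^ (2 * n) - 1 := by
  have hpos : exp (n * θ * I) = exp (θ * I) ^ n := by rw [← exp_nat_mul]; ring_nf
  have hneg : exp (-(n * θ) * I) = (exp (θ * I) ^ n)⁻¹ := by rw [← hpos, ← exp_neg]; ring_nf
  have hz : exp (θ * I) ^ n ≠ 0 := pow_ne_zero _ (exp_ne_zero _)
  rw [sin, hpos, hneg, pow_mul']
  field_simp
  linear_combination (1 - (exp (I * θ) ^ n) ^ 2) * I_sq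

theorem geom_sum_exp_sq_mul_sin (θ : ℂ) (j : ℕ) :
    (∑ k ∈ Finset.range j, exp (θ * I) ^ (2 * k)) * (exp (θ * I) * sin θ) =
      exp (θ * I) ^ j * sin (j * θ) := by
  have h1 := two_I_mul_exp_pow_mul_sin θ 1
  have hj := two_I_mul_exp_pow_mul_sin θ j
  have hgeom := geom_sum_mul (exp (θ * I) ^ 2) j
  simp only [Nat.cast_one, one_mul, pow_one, mul_one] at h1
  simp only [← pow_mul] at hgeom
  apply mul_left_cancel₀ (by simp : (2 * I) ≠ 0)
  linear_combination (∑ k ∈ Finset.range j, exp (θ * I) ^ (2 * k)) * h1 - hj + hgeom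

end Complex

/-- `X ^ (j - 1) * ([j]_X - q)`, where `[j]_z = (z ^ j - z⁻¹ ^ j) / (z - z⁻¹)` is the quantum
integer; at `z = exp (θ * I)` the quantum integer is `sin (j * θ) / sin θ`. -/
noncomputable def quantumIntegerSubPoly (j : ℕ) (q : ℚ) : ℚ[X] :=
  ∑ k ∈ Finset.range j, X ^ (2 * k) - C q * X ^ (j - 1)

theorem aeval_exp_quantumIntegerSubPoly_eq_zero_iff {θ : ℝ} (hθ : sin θ ≠ 0) {j : ℕ}
    (hj : j ≠ 0) (q : ℚ) :
    aeval (Complex.exp (θ * Complex.I)) (quantumIntegerSubPoly j q) = 0 ↔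
      sin (j * θ) = q * sin θ := by
  set z := Complex.exp (θ * Complex.I)
  have hz : z ≠ 0 := Complex.exp_ne_zero _
  have hsin : Complex.sin θ ≠ 0 := by exact_mod_cast hθ
  have key : aeval z (quantumIntegerSubPoly j q) * (z * Complex.sin θ) =
      z ^ j * (Complex.sin (j * θ) - q * Complex.sin θ) := by
    have hzj : z ^ j = z ^ (j - 1) * z := by rw [← pow_succ, Nat.sub_add_cancel (by omega)]
    simp only [quantumIntegerSubPoly, map_sub, map_sum, map_mul, map_pow, aeval_X, aeval_C,
      eq_ratCast]
    rw [sub_mul, Complex.geom_sum_exp_sq_mul_sin, hzj]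
    ring
  rw [← mul_left_inj' (mul_ne_zero hz hsin), zero_mul, key, mul_eq_zero,
    or_iff_right (pow_ne_zero _ hz), sub_eq_zero]
  exact_mod_cast Iff.rfl

theorem quantum_dimension_irrational_even_general (m j : ℕ) (hodd : Odd m)
    (hje : Even j) (hj2 : 2 ≤ j) (hjm : j ≤ (m - 1) / 2) :
    Irrational (Real.sin (j * π / m) / Real.sin (π / m)) := by
  rintro ⟨q, hq⟩
  have h2j : 2 * j < m := by omega
  have hsin_one : 0 < sin (π / m) := by simpa using sin_nat_mul_pi_div_pos one_pos (by omega)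
  have hsin_two : 0 < sin (2 * π / m) := by simpa using sin_nat_mul_pi_div_pos two_pos (by omega)
  have hsin_j : 0 < sin (j * π / m) := sin_nat_mul_pi_div_pos (by omega) (by omega)
  have hsin_2j : 0 < sin (2 * j * π / m) := by
    simpa using sin_nat_mul_pi_div_pos (k := 2 * j) (by omega) h2j
  have hq_pos : (0 : ℝ) < q := by rw [hq]; positivity
  have hm : (m : ℂ) ≠ 0 := by exact_mod_cast (by omega : m ≠ 0)
  have hζ : IsPrimitiveRoot (Complex.exp (↑(π / m) * Complex.I)) (2 * m) := by
    convert Complex.isPrimitiveRoot_exp_of_coprime 1 (2 * m) (by omega) (Nat.coprime_one_left _)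
      using 2
    push_cast; field_simp
  have hη : IsPrimitiveRoot (Complex.exp (↑(π - 2 * π / m) * Complex.I)) (2 * m) := by
    convert Complex.isPrimitiveRoot_exp_of_coprime (m - 2) (2 * m) (by omega)
      (Nat.coprime_sub_two_two_mul_of_odd hodd (by omega)) using 2
    rw [Nat.cast_sub (by omega)]
    push_cast; field_simp
  have hroot := (aeval_exp_quantumIntegerSubPoly_eq_zero_iff hsin_one.ne' (j := j) (by omega) q).2
    (by rw [hq, mul_div_assoc, div_mul_cancel₀ _ hsin_one.ne'])
  have hconj := (aeval_exp_quantumIntegerSubPoly_eq_zero_iff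
    (by rw [sin_pi_sub]; exact hsin_two.ne') (by omega) q).1
    (hζ.aeval_eq_zero_of_aeval_eq_zero (by omega) hη hroot)
  rw [sin_mul_pi_sub_of_even hje, sin_pi_sub, ← mul_div_assoc, ← mul_assoc,
    mul_comm (j : ℝ) 2] at hconj
  nlinarith [mul_pos hq_pos hsin_two]

theorem quantum_dimension_irrational_even (m j : ℕ) (hm : 5 ≤ m) (hodd : Odd m)
    (hje : Even j) (hj2 : 2 ≤ j) (hjm : j ≤ (m - 1) / 2) :
    Irrational (Real.sin (j * π / m) / Real.sin (π / m)) :=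
  quantum_dimension_irrational_even_general m j hodd hje hj2 hjm
end

section
/- Let m be a positive odd integer with m ≥ 5, and let j be an odd integer with 3 ≤ j ≤ (m-1)/2. Then sin(jπ/m)/sin(π/m) ∉ ℚ. -/
open Real Polynomial Finset

private lemma exp_sq_sub_one (x : ℝ) :
    Complex.exp ((x:ℂ) * Complex.I) ^ 2 - 1
      = 2 * Complex.I * ((Real.sin x : ℝ) : ℂ) * Complex.exp ((x:ℂ) * Complex.I) := by
  rw [Complex.ofReal_sin, Complex.sin]
  have h1 : Complex.exp (-(x:ℂ) * Complex.I) * Complex.exp ((x:ℂ) * Complex.I) = 1 := by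
    rw [← Complex.exp_add]
    norm_num
  have h2 : Complex.I ^ 2 = -1 := Complex.I_sq
  linear_combination h1 + (Complex.exp ((x:ℂ) * Complex.I) ^ 2 -
    Complex.exp (-(x:ℂ) * Complex.I) * Complex.exp ((x:ℂ) * Complex.I)) * h2

private lemma dirichlet_kernel (r : ℕ) (θ : ℝ) (hθ : Real.sin θ ≠ 0) :
    ∑ k ∈ Finset.range (2*r+1), Complex.exp (2*(θ:ℂ)*Complex.I) ^ k
      = ((Real.sin ((2*r+1)*θ) / Real.sin θ : ℝ) : ℂ) *
        Complex.exp (2*(θ:ℂ)*Complex.I) ^ r := by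
  set X := Complex.exp ((θ:ℂ)*Complex.I) with hX
  have hXne : X ≠ 0 := Complex.exp_ne_zero _
  have hX2 : Complex.exp (2*(θ:ℂ)*Complex.I) = X^2 := by
    rw [sq, ← Complex.exp_add]
    congr 1
    ring
  have hXj : X^(2*r+1) = Complex.exp ((((2*r+1 : ℕ)):ℂ)*((θ:ℂ)*Complex.I)) := by
    rw [Complex.exp_nat_mul]
  have key1 : X^2 - 1 = 2*Complex.I*((Real.sin θ : ℝ):ℂ)*X := exp_sq_sub_one θ
  have key2 : (X^(2*r+1))^2 - 1
      = 2*Complex.I*((Real.sin ((2*r+1)*θ) : ℝ):ℂ)*X^(2*r+1) := by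
    have h := exp_sq_sub_one ((2*r+1)*θ)
    have e : ((((2*(r:ℝ)+1)*θ : ℝ)):ℂ) * Complex.I
        = ((2*r+1 : ℕ):ℂ)*((θ:ℂ)*Complex.I) := by push_cast; ring
    rw [e, ← hXj] at h
    exact h
  have geom := geom_sum_mul (X^2) (2*r+1)
  have hs : ((Real.sin θ : ℝ) : ℂ) ≠ 0 := Complex.ofReal_ne_zero.mpr hθ
  have main : (∑ k ∈ Finset.range (2*r+1), (X^2)^k) * (2*Complex.I*((Real.sin θ:ℝ):ℂ)*X)
      = 2*Complex.I*((Real.sin ((2*r+1)*θ):ℝ):ℂ)*X^(2*r+1) := by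
    rw [← key1, geom, show ((X^2)^(2*r+1) : ℂ) = (X^(2*r+1))^2 by ring, key2]
  rw [hX2, Complex.ofReal_div, div_mul_eq_mul_div, eq_div_iff hs]
  have hne : (2*Complex.I*X) ≠ 0 :=
    mul_ne_zero (mul_ne_zero two_ne_zero Complex.I_ne_zero) hXne
  apply mul_right_cancel₀ hne
  calc (∑ k ∈ Finset.range (2*r+1), (X^2)^k) * ((Real.sin θ:ℝ):ℂ) * (2*Complex.I*X)
      = (∑ k ∈ Finset.range (2*r+1), (X^2)^k) * (2*Complex.I*((Real.sin θ:ℝ):ℂ)*X) := by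
        ring
    _ = 2*Complex.I*((Real.sin ((2*r+1)*θ):ℝ):ℂ)*X^(2*r+1) := main
    _ = ((Real.sin ((2*r+1)*θ):ℝ):ℂ) * (X^2)^r * (2*Complex.I*X) := by ring

set_option maxHeartbeats 1000000 in
theorem quantum_dimension_irrational_odd (m j : ℕ) (hm : 5 ≤ m) (hodd : Odd m)
    (hjo : Odd j) (hj3 : 3 ≤ j) (hjm : j ≤ (m - 1) / 2) :
    Irrational (Real.sin (j * π / m) / Real.sin (π / m)) := by
  rintro ⟨q, hq⟩
  obtain ⟨a, ha⟩ := hodd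
  obtain ⟨r, hr⟩ := hjo
  subst ha hr
  have ha2 : 2 ≤ a := by omega
  have hr1 : 1 ≤ r := by omega
  have hja : 2*r+1 ≤ a := by omega
  have hπ := Real.pi_pos
  have hMpos : (0:ℝ) < ((2*a+1 : ℕ):ℝ) := by positivity
  have hMne : ((2*a+1 : ℕ):ℝ) ≠ 0 := hMpos.ne'
  have haR : (2*(r:ℝ)+1) ≤ (a:ℝ) := by exact_mod_cast hja
  have hM2 : (2:ℝ) ≤ ((2*a+1 : ℕ):ℝ) := by exact_mod_cast (by omega : 2 ≤ 2*a+1)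
  -- positivity of the two sines
  have hθ₁pos : (0:ℝ) < π / ((2*a+1 : ℕ):ℝ) := by positivity
  have hθ₁le : π / ((2*a+1 : ℕ):ℝ) ≤ π/2 := by
    rw [div_le_div_iff₀ hMpos two_pos]; nlinarith
  have hs1 : 0 < Real.sin (π / ((2*a+1 : ℕ):ℝ)) :=
    Real.sin_pos_of_pos_of_lt_pi hθ₁pos (by nlinarith)
  have hjθ : ((2*r+1 : ℕ):ℝ) * π / ((2*a+1 : ℕ):ℝ)
      = (2*(r:ℝ)+1) * (π / ((2*a+1 : ℕ):ℝ)) := by push_cast; ring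
  have hjθle : (2*(r:ℝ)+1) * (π / ((2*a+1 : ℕ):ℝ)) ≤ π/2 := by
    rw [mul_div_assoc'] at *
    rw [div_le_div_iff₀ hMpos two_pos]
    push_cast
    nlinarith
  have hrR : (1:ℝ) ≤ (r:ℝ) := by exact_mod_cast hr1
  have hq1 : 1 < (q:ℝ) := by
    rw [hq, hjθ, one_lt_div hs1]
    apply Real.strictMonoOn_sin
    · constructor <;> nlinarith
    · constructor <;> nlinarith
    · nlinarith [mul_pos (show (0:ℝ) < 2*(r:ℝ) by linarith) hθ₁pos]
  have hq' : Real.sin ((2*(r:ℝ)+1) * (π / ((2*a+1 : ℕ):ℝ))) / Real.sin (π / ((2*a+1 : ℕ):ℝ))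
      = (q:ℝ) := by rw [← hjθ]; exact hq.symm
  -- complex setup
  set η := Complex.exp (2 * π * Complex.I / ((2*a+1 : ℕ):ℂ)) with hηdef
  have hηne : η ≠ 0 := Complex.exp_ne_zero _
  have hη : IsPrimitiveRoot η (2*a+1) := Complex.isPrimitiveRoot_exp _ (by omega)
  have hηθ : η = Complex.exp (2*((π / ((2*a+1 : ℕ):ℝ) : ℝ):ℂ)*Complex.I) := by
    rw [hηdef]; congr 1; push_cast; ring
  have D1 := dirichlet_kernel r (π / ((2*a+1 : ℕ):ℝ)) hs1.ne'
  have hD1 : ∑ k ∈ Finset.range (2*r+1), η^k = ((q:ℝ):ℂ) * η^r := by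
    rw [hηθ, D1, hq']
  -- the polynomial
  set f : Polynomial ℚ := (∑ k ∈ Finset.range (2*r+1), X^k) - C q * X^r with hf
  have hcast : (algebraMap ℚ ℂ) q = ((q:ℝ):ℂ) := by
    rw [eq_ratCast]; norm_cast
  have hfη : aeval η f = 0 := by
    rw [hf]
    simp only [map_sub, map_sum, map_mul, map_pow, aeval_X, aeval_C]
    rw [sub_eq_zero, hD1, hcast]
  have hco : Nat.Coprime a (2*a+1) := by
    simpa [Nat.add_comm] using ((Nat.coprime_one_left a).add_mul_left_left 2).symm
  have hη' : IsPrimitiveRoot (η^a) (2*a+1) := hη.pow_of_coprime a hco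
  have hmpη : minpoly ℚ η = cyclotomic (2*a+1) ℚ :=
    (cyclotomic_eq_minpoly_rat hη (by omega)).symm
  have hmpη' : minpoly ℚ (η^a) = cyclotomic (2*a+1) ℚ :=
    (cyclotomic_eq_minpoly_rat hη' (by omega)).symm
  have hdvd : minpoly ℚ (η^a) ∣ f := by
    rw [hmpη', ← hmpη]; exact minpoly.dvd ℚ η hfη
  have hfη' : aeval (η^a) f = 0 := by
    obtain ⟨g, hg⟩ := hdvd
    rw [hg, map_mul, minpoly.aeval, zero_mul]
  -- second angle
  have hθ₂pos : (0:ℝ) < (a:ℝ)*π / ((2*a+1 : ℕ):ℝ) := by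
    have : (0:ℝ) < (a:ℝ) := by exact_mod_cast (by omega : 0 < a)
    positivity
  have hθ₂lt : (a:ℝ)*π / ((2*a+1 : ℕ):ℝ) < π := by
    have hlt : (a:ℝ) < ((2*a+1 : ℕ):ℝ) := by exact_mod_cast (by omega : a < 2*a+1)
    rw [div_lt_iff₀ hMpos, mul_comm]
    exact mul_lt_mul_of_pos_left hlt hπ
  have hs2 : 0 < Real.sin ((a:ℝ)*π / ((2*a+1 : ℕ):ℝ)) :=
    Real.sin_pos_of_pos_of_lt_pi hθ₂pos hθ₂lt
  have hηa : η^a = Complex.exp (2*(((a:ℝ)*π / ((2*a+1 : ℕ):ℝ) : ℝ):ℂ)*Complex.I) := by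
    rw [hηdef, ← Complex.exp_nat_mul]; congr 1; push_cast; ring
  have D2 := dirichlet_kernel r ((a:ℝ)*π / ((2*a+1 : ℕ):ℝ)) hs2.ne'
  have hD2 : ∑ k ∈ Finset.range (2*r+1), (η^a)^k
      = ((Real.sin ((2*(r:ℝ)+1) * ((a:ℝ)*π / ((2*a+1 : ℕ):ℝ)))
          / Real.sin ((a:ℝ)*π / ((2*a+1 : ℕ):ℝ)) : ℝ):ℂ) * (η^a)^r := by
    rw [hηa]; exact D2
  have hD2' : ∑ k ∈ Finset.range (2*r+1), (η^a)^k = ((q:ℝ):ℂ) * (η^a)^r := by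
    have := hfη'
    rw [hf] at this
    simp only [map_sub, map_sum, map_mul, map_pow, aeval_X, aeval_C] at this
    rw [sub_eq_zero, hcast] at this
    exact this
  have hpowne : (η^a)^r ≠ 0 := pow_ne_zero _ (pow_ne_zero _ hηne)
  have hrc : ((Real.sin ((2*(r:ℝ)+1) * ((a:ℝ)*π / ((2*a+1 : ℕ):ℝ)))
      / Real.sin ((a:ℝ)*π / ((2*a+1 : ℕ):ℝ)) : ℝ):ℂ) = ((q:ℝ):ℂ) :=
    mul_right_cancel₀ hpowne (by rw [← hD2, hD2'])
  have hq2 : Real.sin ((2*(r:ℝ)+1) * ((a:ℝ)*π / ((2*a+1 : ℕ):ℝ)))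
      / Real.sin ((a:ℝ)*π / ((2*a+1 : ℕ):ℝ)) = (q:ℝ) := by exact_mod_cast hrc
  -- compute the second ratio
  have hMcast : ((2*a+1 : ℕ):ℝ) = 2*(a:ℝ)+1 := by push_cast; ring
  have hMcne : (2*(a:ℝ)+1) ≠ 0 := by positivity
  have hθ₂eq : (a:ℝ)*π / ((2*a+1 : ℕ):ℝ) = π/2 - π/(2*((2*a+1 : ℕ):ℝ)) := by
    rw [hMcast]
    field_simp
    ring
  have hsinθ₂ : Real.sin ((a:ℝ)*π / ((2*a+1 : ℕ):ℝ))
      = Real.cos (π/(2*((2*a+1 : ℕ):ℝ))) := by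
    rw [hθ₂eq, Real.sin_pi_div_two_sub]
  have harg : (2*(r:ℝ)+1) * ((a:ℝ)*π / ((2*a+1 : ℕ):ℝ))
      = (π/2 - (2*(r:ℝ)+1) * (π/(2*((2*a+1 : ℕ):ℝ)))) + (r:ℕ)*π := by
    rw [hMcast]
    field_simp
    ring
  have hsinjθ₂ : Real.sin ((2*(r:ℝ)+1) * ((a:ℝ)*π / ((2*a+1 : ℕ):ℝ)))
      = (-1)^r * Real.cos ((2*(r:ℝ)+1) * (π/(2*((2*a+1 : ℕ):ℝ)))) := by
    rw [harg, Real.sin_add_nat_mul_pi, Real.sin_pi_div_two_sub]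
  set c := Real.cos (π/(2*((2*a+1 : ℕ):ℝ))) with hc
  set cj := Real.cos ((2*(r:ℝ)+1) * (π/(2*((2*a+1 : ℕ):ℝ)))) with hcj
  have hx0 : (0:ℝ) < π/(2*((2*a+1 : ℕ):ℝ)) := by positivity
  have hcpos : 0 < c := by
    rw [hc]
    apply Real.cos_pos_of_mem_Ioo
    constructor
    · nlinarith
    · rw [div_lt_div_iff₀ (by positivity) two_pos]; nlinarith
  have hcjnn : 0 ≤ cj := by
    rw [hcj]
    apply Real.cos_nonneg_of_mem_Icc
    constructor
    · nlinarith
    · rw [← mul_div_assoc, div_le_div_iff₀ (by positivity) two_pos]; nlinarith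
  have hltc : cj < c := by
    rw [hc, hcj]
    apply Real.cos_lt_cos_of_nonneg_of_le_pi hx0.le
    · rw [← mul_div_assoc, div_le_iff₀ (by positivity)]; nlinarith
    · nlinarith
  rw [hsinθ₂, hsinjθ₂] at hq2
  rcases Nat.even_or_odd r with he | ho
  · rw [he.neg_one_pow, one_mul] at hq2
    have : cj / c < 1 := (div_lt_one hcpos).mpr hltc
    linarith [hq2 ▸ this]
  · rw [ho.neg_one_pow] at hq2
    have : -cj / c ≤ 0 := div_nonpos_iff.mpr (Or.inr ⟨by linarith, hcpos.le⟩)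
    rw [neg_one_mul] at hq2
    linarith [hq2 ▸ this]
end

section
/- Define the fusion recursion on a bipartite graph G with adjacency matrix Δ: let N_1 = Id, N_2 = Δ, and N_{k+1} = Δ·N_k − N_{k-1}. If G = A_{m-1}, then N_k has nonnegative integer entries for 1 ≤ k ≤ m-1, and N_{m-1} is a permutation matrix equal to the unique nontrivial graph automorphism of A_{m-1}. -/
/-- Adjacency matrix of the Dynkin diagram `A_N` (path on `N` vertices). -/
def pathAdj (N : ℕ) : Matrix (Fin N) (Fin N) ℝ :=
  Matrix.of fun i j => if (i : ℕ) + 1 = j ∨ (j : ℕ) + 1 = i then 1 else 0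

/-- Closed form for the fusion matrices of `A_n` (1-indexed vertices). -/
def fus (n k a b : ℕ) : ℕ :=
  if (k + a + b) % 2 = 1 ∧ b < a + k ∧ a < b + k ∧ k ≤ a + b ∧ k + a + b ≤ 2 * n + 2
  then 1 else 0

lemma fus_zero_left (n k b : ℕ) : fus n k 0 b = 0 := by
  unfold fus; rw [if_neg]; omega

lemma fus_top_left (n k b : ℕ) : fus n k (n + 1) b = 0 := by
  unfold fus; rw [if_neg]; omega

lemma fus_one (n a b : ℕ) (ha : 1 ≤ a) (ha' : a ≤ n) (hb : 1 ≤ b) (hb' : b ≤ n) :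
    fus n 1 a b = if a = b then 1 else 0 := by
  unfold fus; split_ifs <;> omega

lemma fus_two (n a b : ℕ) (ha : 1 ≤ a) (ha' : a ≤ n) (hb : 1 ≤ b) (hb' : b ≤ n) :
    fus n 2 a b = if a + 1 = b ∨ b + 1 = a then 1 else 0 := by
  unfold fus; split_ifs <;> omega

lemma fus_diag (n a b : ℕ) (ha : 1 ≤ a) (ha' : a ≤ n) (hb : 1 ≤ b) (hb' : b ≤ n) :
    fus n n a b = if a + b = n + 1 then 1 else 0 := by
  unfold fus; split_ifs <;> omega

lemma fus_rec (n k a b : ℕ) (hk : 2 ≤ k) (hk' : k + 1 ≤ n) (ha : 1 ≤ a) (ha' : a ≤ n)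
    (hb : 1 ≤ b) (hb' : b ≤ n) :
    fus n (k + 1) a b + fus n (k - 1) a b = fus n k (a - 1) b + fus n k (a + 1) b := by
  unfold fus; split_ifs <;> omega

lemma path_mul (n : ℕ) (F : ℕ → ℕ → ℝ) (h0 : ∀ b, F 0 b = 0)
    (htop : ∀ b, F (n + 1) b = 0) (i j : Fin n) :
    (pathAdj n * Matrix.of (fun a b : Fin n => F ((a : ℕ) + 1) ((b : ℕ) + 1))) i j =
      F (i : ℕ) ((j : ℕ) + 1) + F ((i : ℕ) + 2) ((j : ℕ) + 1) := by
  rw [Matrix.mul_apply]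
  have step : ∀ l : Fin n,
      pathAdj n i l * Matrix.of (fun a b : Fin n => F ((a : ℕ) + 1) ((b : ℕ) + 1)) l j
      = (if (l : ℕ) + 1 = (i : ℕ) then F ((l : ℕ) + 1) ((j : ℕ) + 1) else 0)
        + (if (i : ℕ) + 1 = (l : ℕ) then F ((l : ℕ) + 1) ((j : ℕ) + 1) else 0) := by
    intro l
    simp only [pathAdj, Matrix.of_apply]
    split_ifs <;> first | (exfalso; omega) | ring
  rw [Finset.sum_congr rfl (fun l _ => step l), Finset.sum_add_distrib]
  congr 1
  · rcases Nat.eq_zero_or_pos (i : ℕ) with h | h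
    · rw [h, h0]
      exact Finset.sum_eq_zero fun l _ => if_neg (by omega)
    · have hlt : (i : ℕ) - 1 < n := by have := i.isLt; omega
      rw [Finset.sum_eq_single (⟨(i : ℕ) - 1, hlt⟩ : Fin n)]
      · rw [if_pos (by simp; omega)]
        congr 1
        simp
        omega
      · intro l _ hl
        refine if_neg fun hc => hl ?_
        ext
        simp
        omega
      · intro h'; exact absurd (Finset.mem_univ _) h'
  · rcases Nat.lt_or_ge ((i : ℕ) + 1) n with h | h
    · rw [Finset.sum_eq_single (⟨(i : ℕ) + 1, h⟩ : Fin n)]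
      · rw [if_pos (by simp)]
      · intro l _ hl
        refine if_neg fun hc => hl ?_
        ext
        simp
        omega
      · intro h'; exact absurd (Finset.mem_univ _) h'
    · have hi := i.isLt
      have hin : (i : ℕ) + 2 = n + 1 := by omega
      rw [hin, htop]
      exact Finset.sum_eq_zero fun l _ => if_neg (by have := l.isLt; omega)

theorem fusion_recursion_A (m : ℕ) (hm : 3 ≤ m)
    (Nk : ℕ → Matrix (Fin (m - 1)) (Fin (m - 1)) ℝ)
    (h1 : Nk 1 = 1) (h2 : Nk 2 = pathAdj (m - 1))
    (hrec : ∀ k, 2 ≤ k → Nk (k + 1) = pathAdj (m - 1) * Nk k - Nk (k - 1)) :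
    (∀ k, 1 ≤ k → k ≤ m - 1 → ∀ i j, ∃ c : ℕ, Nk k i j = c) ∧
    Nk (m - 1) = Matrix.of fun i j : Fin (m - 1) =>
      if (i : ℕ) + (j : ℕ) + 2 = m then 1 else 0 := by
  have key : ∀ k, 1 ≤ k → k ≤ m - 1 →
      Nk k = Matrix.of (fun i j : Fin (m - 1) =>
        ((fus (m - 1) k ((i : ℕ) + 1) ((j : ℕ) + 1) : ℕ) : ℝ)) := by
    intro k
    induction k using Nat.strong_induction_on with
    | _ k ih =>
      match k with
      | 0 => intro h _; exact absurd h (by omega)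
      | 1 =>
        intro _ _
        rw [h1]; ext i j
        simp only [Matrix.one_apply, Matrix.of_apply]
        have hi := i.isLt; have hj := j.isLt
        rw [fus_one _ _ _ (by omega) (by omega) (by omega) (by omega)]
        have hiff : ((i : ℕ) + 1 = (j : ℕ) + 1) ↔ i = j := by rw [Fin.ext_iff]; omega
        simp only [hiff]
        split_ifs <;> norm_num
      | 2 =>
        intro _ _
        rw [h2]; ext i j
        have hi := i.isLt; have hj := j.isLt
        simp only [pathAdj, Matrix.of_apply]
        rw [fus_two _ _ _ (by omega) (by omega) (by omega) (by omega)]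
        split_ifs <;> first | (exfalso; omega) | norm_num
      | (k + 3) =>
        intro _ hk
        have e1 := ih (k + 2) (by omega) (by omega) (by omega)
        have e2 := ih (k + 1) (by omega) (by omega) (by omega)
        rw [hrec (k + 2) (by omega)]
        have hsub : k + 2 - 1 = k + 1 := rfl
        rw [hsub, e1, e2]
        ext i j
        have hi := i.isLt; have hj := j.isLt
        simp only [Matrix.sub_apply, Matrix.of_apply]
        have hp := path_mul (m - 1) (fun a b => ((fus (m - 1) (k + 2) a b : ℕ) : ℝ))
          (fun b => by norm_num [fus_zero_left])
          (fun b => by norm_num [fus_top_left]) i j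
        rw [hp]
        have hr : fus (m - 1) (k + 3) ((i : ℕ) + 1) ((j : ℕ) + 1)
            + fus (m - 1) (k + 1) ((i : ℕ) + 1) ((j : ℕ) + 1) =
            fus (m - 1) (k + 2) (i : ℕ) ((j : ℕ) + 1)
            + fus (m - 1) (k + 2) ((i : ℕ) + 2) ((j : ℕ) + 1) :=
          fus_rec (m - 1) (k + 2) ((i : ℕ) + 1) ((j : ℕ) + 1) (by omega) (by omega)
            (by omega) (by omega) (by omega) (by omega)
        have hr' := congrArg (Nat.cast : ℕ → ℝ) hr
        push_cast at hr'
        linarith [hr']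
  refine ⟨fun k hk1 hk2 i j =>
    ⟨fus (m - 1) k ((i : ℕ) + 1) ((j : ℕ) + 1), by rw [key k hk1 hk2]; rfl⟩, ?_⟩
  rw [key (m - 1) (by omega) le_rfl]
  ext i j
  have hi := i.isLt; have hj := j.isLt
  simp only [Matrix.of_apply]
  rw [fus_diag (m - 1) _ _ (by omega) (by omega) (by omega) (by omega)]
  split_ifs <;> first | (exfalso; omega) | norm_num
end
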